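/- For n ≥ 2, the subgroup K of even-degree, even-edge-count graphs on n+1 vertices is generated, as a group under symmetric difference, by the 4-cycle graphs on 0, i, k, j (with edges {0,i},{i,k},{k,j},{j,0}) for distinct i,j,k in {1,...,n}, together with their images under all permutations of the vertices {0,...,n}; equivalently, K is generated by all 4-cycles in the complete graph K_{n+1}. -/

import Mathlib

open Equiv Finset

abbrev Vtx (n : ℕ) := Fin (n+1)
abbrev Edge (n : ℕ) := {e : Sym2 (Vtx n) // ¬ e.IsDiag}
abbrev Graphs (n : ℕ) := Edge n → ZMod 2

/-- relabelling of edges by a permutation of vertices -/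
def permEdge {n : ℕ} (σ : Perm (Vtx n)) : Edge n ≃ Edge n where
  toFun e := ⟨Sym2.map σ e.1, by
    simpa [Sym2.isDiag_map σ.injective] using e.2⟩
  invFun e := ⟨Sym2.map σ.symm e.1, by
    simpa [Sym2.isDiag_map σ.symm.injective] using e.2⟩
  left_inv e := by
    ext1
    simp [Sym2.map_map]
  right_inv e := by
    ext1
    simp [Sym2.map_map]

/-- action of a vertex permutation on graphs -/
def gact {n : ℕ} (σ : Perm (Vtx n)) : Graphs n ≃+ Graphs n where
  toFun g := fun e => g ((permEdge σ).symm e)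
  invFun g := fun e => g (permEdge σ e)
  left_inv g := by funext e; simp
  right_inv g := by funext e; simp
  map_add' g h := rfl

lemma gact_mul {n : ℕ} (σ τ : Perm (Vtx n)) (g : Graphs n) :
    gact (σ * τ) g = gact σ (gact τ g) := by
  funext e
  simp only [gact, AddEquiv.coe_mk, Equiv.coe_fn_mk, Equiv.symm]
  congr 1
  ext1
  simp [permEdge, Sym2.map_map]
  rfl

/-- the action as a homomorphism to automorphisms, multiplicatively -/
def φn (n : ℕ) : Perm (Vtx n) →* MulAut (Multiplicative (Graphs n)) where
  toFun σ := AddEquiv.toMultiplicative (gact σ)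
  map_one' := by
    ext g
    simp [gact, permEdge, Equiv.Perm.one_symm, Sym2.map_id, Sym2.map_id']
  map_mul' σ τ := by
    ext g
    exact congrFun (gact_mul σ τ g.toAdd) _

/-- the ambient group `Graphs(n+1) ⋊ S_{n+1}` -/
abbrev DG (n : ℕ) := SemidirectProduct (Multiplicative (Graphs n)) (Perm (Vtx n)) (φn n)

/-- the single-edge graph with edge `{u,v}` -/
def single {n : ℕ} (u v : Vtx n) : Graphs n :=
  fun e => if e.1 = s(u, v) then 1 else 0

/-- the generator `x_m = (e_{0m}, (0 m))` -/
def xgen {n : ℕ} (m : Vtx n) : DG n :=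
  ⟨Multiplicative.ofAdd (single 0 m), Equiv.swap 0 m⟩

/-- the degree of a vertex in a graph -/
def deg {n : ℕ} (g : Graphs n) (v : Vtx n) : ℕ :=
  (Finset.univ.filter (fun e : Edge n => v ∈ e.1 ∧ g e = 1)).card

/-- the number of edges of a graph -/
def nedges {n : ℕ} (g : Graphs n) : ℕ :=
  (Finset.univ.filter (fun e : Edge n => g e = 1)).card

/-- all degrees even and an even number of edges -/
def evenGraph {n : ℕ} (g : Graphs n) : Prop :=
  (∀ v : Vtx n, Even (deg g v)) ∧ Even (nedges g)

/-- the subgroup generated by the `x_m`, `m = 1, …, n` -/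
def Dn (n : ℕ) : Subgroup (DG n) :=
  Subgroup.closure {x | ∃ m : Vtx n, m ≠ 0 ∧ x = xgen m}

/-- the complete graph -/
def complete (n : ℕ) : Graphs n := fun _ => 1

/-!
Both parity conditions are additive, and a 4-cycle has even degrees and four edges, so the
4-cycles generate a subgroup of `K`. Conversely, a graph `g` with even degrees is the sum of the
triangles `0ij` over its edges `ij` avoiding the vertex `0`: the difference is supported on the
star at `0` and has even degrees, hence vanishes. Each triangle has three edges, so when `g` also
has an even number of edges, an even number of triangles occur. Two triangles whose base edges
share a vertex add up to a 4-cycle, and any two base edges are linked through a third one sharing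
a vertex with each; so all these triangles agree modulo the span of the 4-cycles, and an even
number of them sums into that span.
-/

namespace Graphs

variable {n : ℕ}

lemma single_comm (x y : Vtx n) : single x y = single y x := by
  funext e
  rw [single, single, Sym2.eq_swap]

lemma single_eq_pi_single {x y : Vtx n} (h : x ≠ y) :
    single x y = Pi.single ⟨s(x, y), Sym2.mk_isDiag_iff.not.mpr h⟩ 1 := by
  funext e
  simp [single, Pi.single_apply, Subtype.ext_iff]

lemma natCast_card_filter_eq_one {α : Type*} (s : Finset α) (f : α → ZMod 2) :
    (#{x ∈ s | f x = 1} : ZMod 2) = ∑ x ∈ s, f x := by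
  have hval : ∀ a : ZMod 2, (if a = 1 then 1 else 0) = a := by decide
  simp only [natCast_card_filter, hval]

def boundary : Graphs n →+ (Vtx n → ZMod 2) where
  toFun g v := ∑ e with v ∈ e.1, g e
  map_zero' := by ext; simp
  map_add' g h := by ext; simp [sum_add_distrib]

def edgeParity : Graphs n →+ ZMod 2 where
  toFun g := ∑ e, g e
  map_zero' := by simp
  map_add' g h := by simp [sum_add_distrib]

lemma boundary_apply (g : Graphs n) (v : Vtx n) : boundary g v = ∑ e with v ∈ e.1, g e := rfl

lemma even_deg_iff (g : Graphs n) (v : Vtx n) : Even (deg g v) ↔ boundary g v = 0 := by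
  rw [← ZMod.natCast_eq_zero_iff_even, deg, ← filter_filter, natCast_card_filter_eq_one]
  rfl

lemma even_nedges_iff (g : Graphs n) : Even (nedges g) ↔ edgeParity g = 0 := by
  rw [← ZMod.natCast_eq_zero_iff_even, nedges, natCast_card_filter_eq_one]
  rfl

def evenGraphs (n : ℕ) : AddSubgroup (Graphs n) := boundary.ker ⊓ edgeParity.ker

lemma mem_evenGraphs_iff (g : Graphs n) : g ∈ evenGraphs n ↔ evenGraph g := by
  simp only [evenGraphs, AddSubgroup.mem_inf, AddMonoidHom.mem_ker, evenGraph, even_deg_iff,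
    even_nedges_iff, funext_iff, Pi.zero_apply]

lemma boundary_single {x y : Vtx n} (h : x ≠ y) :
    boundary (single x y) = Pi.single x 1 + Pi.single y 1 := by
  funext v
  rw [single_eq_pi_single h, boundary_apply, sum_pi_single']
  obtain rfl | hx := eq_or_ne v x
  · simp [h]
  · simp [Pi.single_apply, Sym2.mem_iff, hx]

lemma edgeParity_single {x y : Vtx n} (h : x ≠ y) : edgeParity (single x y) = 1 := by
  simp [edgeParity, single_eq_pi_single h]

def fourCycles (n : ℕ) : Set (Graphs n) := {c : Graphs n | ∃ a b u v : Vtx n,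
    a ≠ b ∧ a ≠ u ∧ a ≠ v ∧ b ≠ u ∧ b ≠ v ∧ u ≠ v ∧
    c = single a b + single b u + single u v + single v a}

lemma fourCycles_subset_evenGraphs : fourCycles n ⊆ evenGraphs n := by
  rintro _ ⟨a, b, u, v, hab, -, hav, hbu, -, huv, rfl⟩
  refine AddSubgroup.mem_inf.2 ⟨?_, ?_⟩
  · simp only [AddMonoidHom.mem_ker, map_add, boundary_single hab, boundary_single hbu,
      boundary_single huv, boundary_single hav.symm]
    rw [add_assoc (_ + _), ZModModule.add_add_add_cancel, ZModModule.add_add_add_cancel,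
      ZModModule.add_add_add_cancel, ZModModule.add_self]
  · simp only [AddMonoidHom.mem_ker, map_add, edgeParity_single hab, edgeParity_single hbu,
      edgeParity_single huv, edgeParity_single hav.symm]
    decide

def triangle : Sym2 (Vtx n) → Graphs n :=
  Sym2.lift ⟨fun i j => single 0 i + single i j + single j 0, fun i j => by
    dsimp only
    rw [single_comm i j, single_comm 0 i, single_comm j 0]
    abel⟩

lemma triangle_mk (i j : Vtx n) : triangle s(i, j) = single 0 i + single i j + single j 0 := rfl

lemma exists_eq_mk_of_zero_notMem (e : Edge n) (he : 0 ∉ e.1) :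
    ∃ i j : Vtx n, i ≠ 0 ∧ j ≠ 0 ∧ i ≠ j ∧ e.1 = s(i, j) := by
  obtain ⟨⟨i, j⟩, hij⟩ := e
  refine ⟨i, j, ?_, ?_, by simpa using hij, rfl⟩ <;> rintro rfl <;> simp at he

lemma triangle_apply_of_zero_notMem (z : Sym2 (Vtx n)) {f : Edge n} (hf : 0 ∉ f.1) :
    triangle z f = if f.1 = z then 1 else 0 := by
  induction z using Sym2.ind with
  | _ i j =>
    have h0i : f.1 ≠ s(0, i) := by rintro h; simp [h] at hf
    have hj0 : f.1 ≠ s(j, 0) := by rintro h; simp [h] at hf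
    simp [triangle_mk, single, h0i, hj0]

lemma boundary_triangle (e : Edge n) (he : 0 ∉ e.1) : boundary (triangle e.1) = 0 := by
  obtain ⟨i, j, hi, hj, hij, hije⟩ := exists_eq_mk_of_zero_notMem e he
  rw [hije, triangle_mk, map_add, map_add, boundary_single hi.symm, boundary_single hij,
    boundary_single hj, ZModModule.add_add_add_cancel, ZModModule.add_add_add_cancel,
    ZModModule.add_self]

lemma edgeParity_triangle (e : Edge n) (he : 0 ∉ e.1) : edgeParity (triangle e.1) = 1 := by
  obtain ⟨i, j, hi, hj, hij, hije⟩ := exists_eq_mk_of_zero_notMem e he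
  rw [hije, triangle_mk, map_add, map_add, edgeParity_single hi.symm, edgeParity_single hij,
    edgeParity_single hj]
  decide

lemma eq_zero_of_boundary_eq_zero_of_forall_zero_notMem {g : Graphs n} (hb : boundary g = 0)
    (hg : ∀ f : Edge n, 0 ∉ f.1 → g f = 0) : g = 0 := by
  funext f
  by_cases hf : 0 ∈ f.1
  · obtain ⟨m, hm⟩ := Sym2.mem_iff_exists.1 hf
    have hm0 : (0 : Vtx n) ≠ m := by rintro rfl; exact f.2 (hm ▸ Sym2.mk_isDiag_iff.2 rfl)
    have hmf : m ∈ f.1 := hm ▸ Sym2.mem_mk_right 0 m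
    have hbm : boundary g m = 0 := congrFun hb m
    rw [Pi.zero_apply, ← hbm, boundary_apply, sum_eq_single_of_mem f (by simpa using hmf)]
    intro f' hf' hne
    refine hg f' fun h0 => hne (Subtype.ext ?_)
    rw [hm, ← Sym2.mem_and_mem_iff hm0]
    exact ⟨h0, (mem_filter.1 hf').2⟩
  · exact hg f hf

def nonstarSupport (g : Graphs n) : Finset (Edge n) := {e | 0 ∉ e.1 ∧ g e = 1}

lemma eq_sum_triangle {g : Graphs n} (hg : boundary g = 0) :
    g = ∑ e ∈ nonstarSupport g, triangle e.1 := by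
  rw [← sub_eq_zero]
  apply eq_zero_of_boundary_eq_zero_of_forall_zero_notMem
  · rw [map_sub, map_sum, hg, zero_sub, neg_eq_zero]
    exact sum_eq_zero fun e he => boundary_triangle e (mem_filter.1 he).2.1
  · intro f hf
    have hval : ∀ a : ZMod 2, a - (if a = 1 then 1 else 0) = 0 := by decide
    rw [Pi.sub_apply, Finset.sum_apply]
    simp only [triangle_apply_of_zero_notMem _ hf, ← Subtype.ext_iff, sum_ite_eq, nonstarSupport,
      mem_filter, mem_univ, hf, true_and, not_false_eq_true, hval]

lemma natCast_card_nonstarSupport {g : Graphs n} (hg : boundary g = 0) :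
    (#(nonstarSupport g) : ZMod 2) = edgeParity g := by
  conv_rhs => rw [eq_sum_triangle hg, map_sum]
  rw [sum_congr rfl fun e he => edgeParity_triangle e (mem_filter.1 he).2.1]
  simp

lemma triangle_add_triangle_mem_of_adj {i j l : Vtx n} (hi : i ≠ 0) (hj : j ≠ 0) (hl : l ≠ 0)
    (hij : i ≠ j) (hil : i ≠ l) :
    triangle s(i, j) + triangle s(i, l) ∈ AddSubgroup.closure (fourCycles n) := by
  obtain rfl | hjl := eq_or_ne j l
  · rw [ZModModule.add_self]
    exact zero_mem _
  apply AddSubgroup.subset_closure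
  refine ⟨i, j, 0, l, hij, hi, hil, hj, hjl, hl.symm, ?_⟩
  rw [triangle_mk, triangle_mk, single_comm 0 l, single_comm l i]
  linear_combination (norm := module) ZModModule.add_self (single 0 i)

lemma triangle_add_triangle_mem {e f : Edge n} (he : 0 ∉ e.1) (hf : 0 ∉ f.1) :
    triangle e.1 + triangle f.1 ∈ AddSubgroup.closure (fourCycles n) := by
  obtain ⟨i, j, hi, hj, hij, hije⟩ := exists_eq_mk_of_zero_notMem e he
  obtain ⟨k, l, hk, hl, hkl, hklf⟩ := exists_eq_mk_of_zero_notMem f hf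
  rw [hije, hklf]
  obtain rfl | hli := eq_or_ne l i
  · rw [Sym2.eq_swap (a := k)]
    exact triangle_add_triangle_mem_of_adj hl hj hk hij hkl.symm
  have hil : triangle s(i, j) + triangle s(i, l) ∈ AddSubgroup.closure (fourCycles n) :=
    triangle_add_triangle_mem_of_adj hi hj hl hij hli.symm
  have hlk : triangle s(i, l) + triangle s(k, l) ∈ AddSubgroup.closure (fourCycles n) := by
    rw [Sym2.eq_swap (a := i), Sym2.eq_swap (a := k)]
    exact triangle_add_triangle_mem_of_adj hl hi hk hli hkl.symm
  simpa only [ZModModule.add_add_add_cancel] using add_mem hil hlk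

lemma evenGraphs_le_closure_fourCycles : evenGraphs n ≤ AddSubgroup.closure (fourCycles n) := by
  intro g hg
  obtain ⟨hb, hp⟩ := AddSubgroup.mem_inf.1 hg
  rw [AddMonoidHom.mem_ker] at hb hp
  rw [eq_sum_triangle hb]
  obtain hS | ⟨e₀, he₀⟩ := (nonstarSupport g).eq_empty_or_nonempty
  · rw [hS, sum_empty]
    exact zero_mem _
  have hcard : (#(nonstarSupport g) : ZMod 2) = 0 := by rw [natCast_card_nonstarSupport hb, hp]
  have hsum : ∑ e ∈ nonstarSupport g, (triangle e.1 + triangle e₀.1) =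
      ∑ e ∈ nonstarSupport g, triangle e.1 := by
    rw [sum_add_distrib, sum_const, ← Nat.cast_smul_eq_nsmul (ZMod 2), hcard, zero_smul, add_zero]
  rw [← hsum]
  exact sum_mem fun e he =>
    triangle_add_triangle_mem (mem_filter.1 he).2.1 (mem_filter.1 he₀).2.1

theorem closure_fourCycles (n : ℕ) : AddSubgroup.closure (fourCycles n) = evenGraphs n :=
  le_antisymm ((AddSubgroup.closure_le _).2 fourCycles_subset_evenGraphs)
    evenGraphs_le_closure_fourCycles

end Graphs

theorem stmt10_general (n : ℕ) (g : Graphs n) :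
    g ∈ AddSubgroup.closure {c : Graphs n | ∃ a b u v : Vtx n,
        a ≠ b ∧ a ≠ u ∧ a ≠ v ∧ b ≠ u ∧ b ≠ v ∧ u ≠ v ∧
        c = single a b + single b u + single u v + single v a} ↔
      evenGraph g := by
  rw [← Graphs.mem_evenGraphs_iff, ← Graphs.closure_fourCycles]
  rfl

/-- For `n ≥ 2`, the group of even-degree, even-edge-count graphs on `n+1` vertices is
generated, under symmetric difference, by all 4-cycles in the complete graph. -/
theorem stmt10 (n : ℕ) (hn : 2 ≤ n) (g : Graphs n) :
    g ∈ AddSubgroup.closure {c : Graphs n | ∃ a b u v : Vtx n,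
        a ≠ b ∧ a ≠ u ∧ a ≠ v ∧ b ≠ u ∧ b ≠ v ∧ u ≠ v ∧
        c = single a b + single b u + single u v + single v a} ↔
      evenGraph g :=
  stmt10_general n g
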